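/- arXiv:1903.11893 — 3 statements merged into one kernel-verified Lean document; each statement's English description precedes it below -/
import Mathlib

section
/- Let w : ℤ → ℝ → ℝ be a family of differentiable functions satisfying for all n ∈ ℤ and t ∈ ℝ the equation ẇ_n = w_n (w_n + 1)(w_{n+2} w_{n+1} − w_{n−1} w_{n−2}). Define u_n(t) = w_{n+2}(t) w_{n+1}(t) (w_n(t) + 1). Then for all n ∈ ℤ and t ∈ ℝ, u̇_n = u_n (u_{n+2} + u_{n+1} − u_{n−1} − u_{n−2}), i.e., the Miura-type transformation u_n = w_{n+2} w_{n+1}(w_n + 1) maps solutions of the modified equation to solutions of the INB equation. -/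
/-! Since `uₙ` is a product of three of the `wₖ`, the Leibniz rule expresses `u̇ₙ` as a polynomial
in `w_{n−2}, …, w_{n+4}`, and this polynomial coincides with the INB right-hand side evaluated at
`u`: the theorem reduces to a polynomial identity in seven variables. -/

section Lattice

variable {R : Type*} [CommRing R]

def modifiedINBField (w : ℤ → R) (n : ℤ) : R :=
  w n * (w n + 1) * (w (n + 2) * w (n + 1) - w (n - 1) * w (n - 2))

def inbField (u : ℤ → R) (n : ℤ) : R :=
  u n * (u (n + 2) + u (n + 1) - u (n - 1) - u (n - 2))

def miuraMap (w : ℤ → R) (n : ℤ) : R :=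
  w (n + 2) * w (n + 1) * (w n + 1)

theorem leibniz_miuraMap_modifiedINBField (w : ℤ → R) (n : ℤ) :
    modifiedINBField w (n + 2) * w (n + 1) * (w n + 1)
      + w (n + 2) * modifiedINBField w (n + 1) * (w n + 1)
      + w (n + 2) * w (n + 1) * modifiedINBField w n
      = inbField (miuraMap w) n := by
  simp only [modifiedINBField, inbField, miuraMap]
  -- `ring_nf` also normalises the indices `n + 2 + 2`, `n + 2 - 1`, … inside the arguments of `w`
  ring_nf

end Lattice

theorem hasDerivAt_miuraMap {𝕜 : Type*} [NontriviallyNormedField 𝕜] {w : ℤ → 𝕜 → 𝕜}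
    {w' : ℤ → 𝕜} {t : 𝕜} (hw : ∀ k, HasDerivAt (w k) (w' k) t) (n : ℤ) :
    HasDerivAt (fun s ↦ miuraMap (fun k ↦ w k s) n)
      (w' (n + 2) * w (n + 1) t * (w n t + 1) + w (n + 2) t * w' (n + 1) * (w n t + 1)
        + w (n + 2) t * w (n + 1) t * w' n) t := by
  refine (((hw (n + 2)).mul (hw (n + 1))).mul ((hw n).add_const 1)).congr_deriv ?_
  simp only [Pi.mul_apply]
  ring

/-- Equation `ẇₙ = wₙ(wₙ+1)(w_{n+2}w_{n+1} − w_{n−1}w_{n−2})` is transformed into the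
INB equation by the Miura-type transformation `uₙ = w_{n+2} w_{n+1} (wₙ + 1)`. -/
theorem stmt_9 (w : ℤ → ℝ → ℝ)
    (hw : ∀ (n : ℤ) (t : ℝ), HasDerivAt (w n)
      (w n t * (w n t + 1) * (w (n + 2) t * w (n + 1) t - w (n - 1) t * w (n - 2) t)) t)
    (u : ℤ → ℝ → ℝ)
    (hu : ∀ (n : ℤ) (t : ℝ), u n t = w (n + 2) t * w (n + 1) t * (w n t + 1)) :
    ∀ (n : ℤ) (t : ℝ), HasDerivAt (u n)
      (u n t * (u (n + 2) t + u (n + 1) t - u (n - 1) t - u (n - 2) t)) t := by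
  intro n t
  have hu_miura : u = fun k s ↦ miuraMap (fun j ↦ w j s) k := funext₂ hu
  have hw_field : ∀ k, HasDerivAt (w k) (modifiedINBField (fun j ↦ w j t) k) t := (hw · t)
  have h := hasDerivAt_miuraMap hw_field n
  rw [leibniz_miuraMap_modifiedINBField] at h
  rw [hu_miura]
  exact h
end

section
/- Let z : ℤ → ℝ → ℝ be a family of differentiable functions with z_{n+1}(t) ≠ z_n(t) for all n, t, satisfying for all n ∈ ℤ and t ∈ ℝ the equation ż_n = −z_n [ z_{n+1}/((z_{n+2} − z_{n+1})(z_{n+1} − z_n)) + z_n/((z_{n+1} − z_n)(z_n − z_{n−1})) + z_{n−1}/((z_n − z_{n−1})(z_{n−1} − z_{n−2})) ]. Define u_n(t) = z_{n+2}(t) z_{n+1}(t) / ((z_{n+3}(t) − z_{n+2}(t))(z_{n+2}(t) − z_{n+1}(t))(z_{n+1}(t) − z_n(t))). Then for all n ∈ ℤ and t ∈ ℝ, u̇_n = u_n (u_{n+2} + u_{n+1} − u_{n−1} − u_{n−2}), i.e., u solves the INB equation. -/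
/-!
Write `wₙ = zₙ / ((zₙ₊₁ - zₙ)(zₙ - zₙ₋₁))`, so that `żₙ = -zₙ (wₙ₊₁ + wₙ + wₙ₋₁)`. Since
`uₙ = zₙ₊₁ wₙ₊₂ / (zₙ₊₁ - zₙ)` and `uₙ₋₂ = zₙ wₙ₋₁ / (zₙ₊₁ - zₙ)`, the difference `zₙ₊₁ - zₙ` has
logarithmic derivative `-(uₙ - uₙ₋₂ + wₙ₊₁ + wₙ)`. Summing the logarithmic derivatives of the five
factors of `uₙ = zₙ₊₂ zₙ₊₁ / ((zₙ₊₃ - zₙ₊₂)(zₙ₊₂ - zₙ₊₁)(zₙ₊₁ - zₙ))`, all the `w` terms cancel and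
`uₙ₊₂ + uₙ₊₁ - uₙ₋₁ - uₙ₋₂` remains. Logarithmic derivatives are kept in the form `f' = f a`,
which makes sense even where `zₙ` vanishes.
-/

section LogDeriv

variable {𝕜 : Type*} [NontriviallyNormedField 𝕜] {x : 𝕜}

theorem HasDerivAt.mul_logDeriv {𝔸 : Type*} [NormedCommRing 𝔸] [NormedAlgebra 𝕜 𝔸]
    {f g : 𝕜 → 𝔸} {a b : 𝔸} (hf : HasDerivAt f (f x * a) x) (hg : HasDerivAt g (g x * b) x) :
    HasDerivAt (fun y => f y * g y) (f x * g x * (a + b)) x :=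
  (hf.fun_mul hg).congr_deriv (by ring)

theorem HasDerivAt.div_logDeriv {𝕜' : Type*} [NontriviallyNormedField 𝕜'] [NormedAlgebra 𝕜 𝕜']
    {f g : 𝕜 → 𝕜'} {a b : 𝕜'} (hf : HasDerivAt f (f x * a) x) (hg : HasDerivAt g (g x * b) x)
    (hx : g x ≠ 0) : HasDerivAt (fun y => f y / g y) (f x / g x * (a - b)) x :=
  (hf.fun_div hg hx).congr_deriv (by field_simp)

end LogDeriv

namespace INB

variable (z : ℤ → ℝ → ℝ)

noncomputable def weight (n : ℤ) (t : ℝ) : ℝ :=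
  z n t / ((z (n + 1) t - z n t) * (z n t - z (n - 1) t))

noncomputable def miura (n : ℤ) (t : ℝ) : ℝ :=
  z (n + 2) t * z (n + 1) t
    / ((z (n + 3) t - z (n + 2) t) * (z (n + 2) t - z (n + 1) t) * (z (n + 1) t - z n t))

theorem miura_eq_mul_weight_div (n : ℤ) (t : ℝ) :
    miura z n t = z (n + 1) t * weight z (n + 2) t / (z (n + 1) t - z n t) := by
  simp only [miura, weight, add_assoc, add_sub_assoc, Int.reduceAdd, Int.reduceSub]
  field_simp

theorem miura_sub_two_eq_mul_weight_div (n : ℤ) (t : ℝ) :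
    miura z (n - 2) t = z n t * weight z (n - 1) t / (z (n + 1) t - z n t) := by
  simp only [miura, weight, sub_add_eq_add_sub, add_sub_assoc, sub_sub, Int.reduceAdd,
    Int.reduceSub, ← sub_eq_add_neg, add_zero]
  field_simp

variable {z}

theorem hasDerivAt_succ_sub
    (hz : ∀ n t, HasDerivAt (z n)
      (z n t * -(weight z (n + 1) t + weight z n t + weight z (n - 1) t)) t)
    (hzne : ∀ n t, z (n + 1) t ≠ z n t) (n : ℤ) (t : ℝ) :
    HasDerivAt (fun s => z (n + 1) s - z n s)
      ((z (n + 1) t - z n t) *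
        -(miura z n t - miura z (n - 2) t + weight z (n + 1) t + weight z n t)) t := by
  have hD : z (n + 1) t - z n t ≠ 0 := sub_ne_zero.mpr (hzne n t)
  refine ((hz (n + 1) t).sub (hz n t)).congr_deriv ?_
  rw [miura_eq_mul_weight_div, miura_sub_two_eq_mul_weight_div, add_sub_cancel_right,
    add_assoc n 1 1, one_add_one_eq_two]
  field_simp
  ring

theorem hasDerivAt_miura
    (hz : ∀ n t, HasDerivAt (z n)
      (z n t * -(weight z (n + 1) t + weight z n t + weight z (n - 1) t)) t)
    (hzne : ∀ n t, z (n + 1) t ≠ z n t) (n : ℤ) (t : ℝ) :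
    HasDerivAt (miura z n)
      (miura z n t *
        (miura z (n + 2) t + miura z (n + 1) t - miura z (n - 1) t - miura z (n - 2) t)) t := by
  have hD : ∀ m, z (m + 1) t - z m t ≠ 0 := fun m => sub_ne_zero.mpr (hzne m t)
  have hnum := (hz (n + 2) t).mul_logDeriv (hz (n + 1) t)
  have hden := ((hasDerivAt_succ_sub hz hzne (n + 2) t).mul_logDeriv
    (hasDerivAt_succ_sub hz hzne (n + 1) t)).mul_logDeriv (hasDerivAt_succ_sub hz hzne n t)
  have := hnum.div_logDeriv hden (mul_ne_zero (mul_ne_zero (hD _) (hD _)) (hD _))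
  simp only [add_assoc, add_sub_assoc, Int.reduceAdd, Int.reduceSub, add_zero,
    ← sub_eq_add_neg] at this
  change HasDerivAt (miura z n) (miura z n t * _) t at this
  exact this.congr_deriv (by ring)

end INB

/-- Equation `żₙ = −zₙ(T+1+T⁻¹)[zₙ/((z_{n+1}−zₙ)(zₙ−z_{n−1}))]` is transformed into
the INB equation by `uₙ = z_{n+2} z_{n+1} / ((z_{n+3}−z_{n+2})(z_{n+2}−z_{n+1})(z_{n+1}−zₙ))`. -/
theorem stmt_16 (z : ℤ → ℝ → ℝ)
    (hzne : ∀ (n : ℤ) (t : ℝ), z (n + 1) t ≠ z n t)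
    (hz : ∀ (n : ℤ) (t : ℝ), HasDerivAt (z n)
      (-(z n t) * (z (n + 1) t / ((z (n + 2) t - z (n + 1) t) * (z (n + 1) t - z n t))
        + z n t / ((z (n + 1) t - z n t) * (z n t - z (n - 1) t))
        + z (n - 1) t / ((z n t - z (n - 1) t) * (z (n - 1) t - z (n - 2) t)))) t)
    (u : ℤ → ℝ → ℝ)
    (hu : ∀ (n : ℤ) (t : ℝ),
      u n t = z (n + 2) t * z (n + 1) t
        / ((z (n + 3) t - z (n + 2) t) * (z (n + 2) t - z (n + 1) t) * (z (n + 1) t - z n t))) :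
    ∀ (n : ℤ) (t : ℝ), HasDerivAt (u n)
      (u n t * (u (n + 2) t + u (n + 1) t - u (n - 1) t - u (n - 2) t)) t := by
  obtain rfl : u = INB.miura z := funext₂ hu
  have hz' : ∀ n t, HasDerivAt (z n)
      (z n t * -(INB.weight z (n + 1) t + INB.weight z n t + INB.weight z (n - 1) t)) t :=
    fun n t => (hz n t).congr_deriv (by
      simp only [INB.weight, add_assoc, sub_sub, Int.reduceAdd, add_sub_cancel_right,
        sub_add_cancel]
      ring)
  exact INB.hasDerivAt_miura hz' hzne
end

section
/- Let y : ℤ → ℝ → ℝ be a family of differentiable functions with y_{n+3}(t) ≠ y_n(t) for all n, t, satisfying for all n ∈ ℤ and t ∈ ℝ the equation ẏ_n = 1/((y_{n+2} − y_{n−1})(y_{n+1} − y_{n−2})). Define u_n(t) = −1/((y_{n+5}(t) − y_{n+2}(t))(y_{n+4}(t) − y_{n+1}(t))(y_{n+3}(t) − y_n(t))). Then for all n ∈ ℤ and t ∈ ℝ, u̇_n = u_n (u_{n+2} + u_{n+1} − u_{n−1} − u_{n−2}), i.e., u solves the INB equation; this exhibits a modification of the INB equation of the highest possible fifth level. -/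
/-!
Put `w n = y (n+3) - y n`. The equation for `y` says `ẏ n = 1 / (w (n-1) * w (n-2))`, so
`ẇ n = 1 / (w (n+2) * w (n+1)) - 1 / (w (n-1) * w (n-2))`, and with
`u n = -1 / (w (n+2) * w (n+1) * w n)` this is the logarithmic derivative
`ẇ n / w n = u (n-2) - u n`. Hence `u̇ n / u n = -(ẇ (n+2) / w (n+2) + ẇ (n+1) / w (n+1) + ẇ n / w n)`
telescopes to `u (n+2) + u (n+1) - u (n-1) - u (n-2)`.
-/

variable {𝕜 : Type*} [NontriviallyNormedField 𝕜]

def IsINBSolution (u : ℤ → 𝕜 → 𝕜) : Prop :=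
  ∀ n t, HasDerivAt (u n) (u n t * (u (n + 2) t + u (n + 1) t - u (n - 1) t - u (n - 2) t)) t

theorem hasDerivAt_shift_sub {y w : ℤ → 𝕜 → 𝕜} (hw : ∀ n s, w n s = y (n + 3) s - y n s)
    (hy : ∀ n t, HasDerivAt (y n) (1 / (w (n - 1) t * w (n - 2) t)) t) (n : ℤ) (t : 𝕜) :
    HasDerivAt (w n) (1 / (w (n + 2) t * w (n + 1) t) - 1 / (w (n - 1) t * w (n - 2) t)) t := by
  have hder := (hy (n + 3) t).sub (hy n t)
  rw [show n + 3 - 1 = n + 2 by ring, show n + 3 - 2 = n + 1 by ring] at hder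
  rwa [show w n = _ from funext (hw n)]

theorem hasDerivAt_mul_sub_of_eq_neg_inv {w u : ℤ → 𝕜 → 𝕜} (hw0 : ∀ n t, w n t ≠ 0)
    (hu : ∀ n t, u n t = -(w (n + 2) t * w (n + 1) t * w n t)⁻¹) {n : ℤ} {t : 𝕜}
    (hw : HasDerivAt (w n)
      (1 / (w (n + 2) t * w (n + 1) t) - 1 / (w (n - 1) t * w (n - 2) t)) t) :
    HasDerivAt (w n) (w n t * (u (n - 2) t - u n t)) t := by
  convert hw using 1
  rw [hu, hu, show n - 2 + 2 = n by ring, show n - 2 + 1 = n - 1 by ring]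
  field_simp [hw0 n t, hw0 (n + 1) t, hw0 (n + 2) t, hw0 (n - 1) t, hw0 (n - 2) t]
  ring

theorem HasDerivAt.neg_inv_mul_mul_of_logDeriv {f g h : 𝕜 → 𝕜} {α β γ t : 𝕜}
    (hf : HasDerivAt f (f t * α) t) (hg : HasDerivAt g (g t * β) t)
    (hh : HasDerivAt h (h t * γ) t) (hne : f t * g t * h t ≠ 0) :
    HasDerivAt (fun s => -(f s * g s * h s)⁻¹) (-(f t * g t * h t)⁻¹ * -(α + β + γ)) t := by
  refine (((hf.mul hg).mul hh).inv hne).neg.congr_deriv ?_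
  simp only [Pi.mul_apply]
  field_simp

theorem IsINBSolution.of_logDeriv {w u : ℤ → 𝕜 → 𝕜} (hw0 : ∀ n t, w n t ≠ 0)
    (hu : ∀ n t, u n t = -(w (n + 2) t * w (n + 1) t * w n t)⁻¹)
    (hw : ∀ n t, HasDerivAt (w n) (w n t * (u (n - 2) t - u n t)) t) :
    IsINBSolution u := by
  intro n t
  have hne : w (n + 2) t * w (n + 1) t * w n t ≠ 0 :=
    mul_ne_zero (mul_ne_zero (hw0 _ t) (hw0 _ t)) (hw0 n t)
  have hder := (hw (n + 2) t).neg_inv_mul_mul_of_logDeriv (hw (n + 1) t) (hw n t) hne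
  rw [show n + 2 - 2 = n by ring, show n + 1 - 2 = n - 1 by ring, ← hu] at hder
  rw [← show u n = _ from funext (hu n)] at hder
  convert hder using 1
  ring

/-- Equation `ẏₙ = 1/((y_{n+2}−y_{n−1})(y_{n+1}−y_{n−2}))` is transformed into
the INB equation by the fifth-order transformation
`uₙ = −1/((y_{n+5}−y_{n+2})(y_{n+4}−y_{n+1})(y_{n+3}−yₙ))`;
this is a modification of the INB equation of the highest possible fifth level. -/
theorem stmt_17 (y : ℤ → ℝ → ℝ)
    (hyne : ∀ (n : ℤ) (t : ℝ), y (n + 3) t ≠ y n t)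
    (hy : ∀ (n : ℤ) (t : ℝ), HasDerivAt (y n)
      (1 / ((y (n + 2) t - y (n - 1) t) * (y (n + 1) t - y (n - 2) t))) t)
    (u : ℤ → ℝ → ℝ)
    (hu : ∀ (n : ℤ) (t : ℝ),
      u n t = -(1 / ((y (n + 5) t - y (n + 2) t) * (y (n + 4) t - y (n + 1) t)
        * (y (n + 3) t - y n t)))) :
    ∀ (n : ℤ) (t : ℝ), HasDerivAt (u n)
      (u n t * (u (n + 2) t + u (n + 1) t - u (n - 1) t - u (n - 2) t)) t := by
  set w : ℤ → ℝ → ℝ := fun n s => y (n + 3) s - y n s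
  have hw0 : ∀ n t, w n t ≠ 0 := fun n t => sub_ne_zero.mpr (hyne n t)
  have hyw : ∀ n t, HasDerivAt (y n) (1 / (w (n - 1) t * w (n - 2) t)) t := by
    intro n t
    simpa only [w, show n - 1 + 3 = n + 2 by ring, show n - 2 + 3 = n + 1 by ring] using hy n t
  have huw : ∀ n t, u n t = -(w (n + 2) t * w (n + 1) t * w n t)⁻¹ := by
    intro n t
    simp only [hu, w, one_div, show n + 2 + 3 = n + 5 by ring, show n + 1 + 3 = n + 4 by ring]
  exact IsINBSolution.of_logDeriv hw0 huw fun n t =>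
    hasDerivAt_mul_sub_of_eq_neg_inv hw0 huw (hasDerivAt_shift_sub (fun _ _ => rfl) hyw n t)
end
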